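/- arXiv:1611.01718 — 2 statements merged into one kernel-verified Lean document; each statement's English description precedes it below -/
import Mathlib

section
/- Let G be a finite group, N_G = Σ_{g∈G} g the norm element of ℤ[G], and M = ℤ[G]/ℤ·N_G the quotient of the left-regular representation of G on ℤ[G] by the trivial subrepresentation spanned by N_G. Then the first group cohomology H^1(G, M) is isomorphic as an abelian group to the group Hom(G, ℚ/ℤ) of group homomorphisms from G to ℚ/ℤ; in particular, H^1(G, M) is finite of order equal to the order of the abelianization of G. -/
set_option linter.unusedSectionVars false


open Finsupp

/-- The norm element `N_G = ∑ g ∈ G, g` of the integral group ring `ℤ[G]`. -/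
noncomputable def normElement (G : Type) [Group G] [Fintype G] : G →₀ ℤ :=
  ∑ g : G, Finsupp.single g 1

/-- The submodule `ℤ·N_G` of `ℤ[G]` spanned by the norm element. -/
noncomputable def normSubmodule (G : Type) [Group G] [Fintype G] : Submodule ℤ (G →₀ ℤ) :=
  Submodule.span ℤ {normElement G}

/-- The quotient representation `M = ℤ[G]/ℤ·N_G` of the left-regular representation of `G`
on `ℤ[G]` by the trivial subrepresentation spanned by the norm element. -/
noncomputable def normQuotRep (G : Type) [Group G] [Fintype G] :
    Representation ℤ G ((G →₀ ℤ) ⧸ normSubmodule G) where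
  toFun g := Submodule.mapQ (normSubmodule G) (normSubmodule G)
    ((MonoidAlgebra.coeffLinearEquiv ℤ).toLinearMap ∘ₗ Representation.ofMulAction ℤ G G g ∘ₗ
      (MonoidAlgebra.coeffLinearEquiv ℤ).symm.toLinearMap)
    (by
      rw [normSubmodule, Submodule.span_le, Set.singleton_subset_iff]
      have h : ((MonoidAlgebra.coeffLinearEquiv ℤ).toLinearMap ∘ₗ Representation.ofMulAction ℤ G G g ∘ₗ
          (MonoidAlgebra.coeffLinearEquiv ℤ).symm.toLinearMap) (normElement G) = normElement G := by
        rw [normElement, map_sum]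
        simp [Representation.ofMulAction_def, smul_eq_mul]
        exact Fintype.sum_equiv (Equiv.mulLeft g) _ _ (fun h => rfl)
      show ((MonoidAlgebra.coeffLinearEquiv ℤ).toLinearMap ∘ₗ Representation.ofMulAction ℤ G G g ∘ₗ
          (MonoidAlgebra.coeffLinearEquiv ℤ).symm.toLinearMap) (normElement G) ∈ normSubmodule G
      rw [h, normSubmodule]
      exact Submodule.mem_span_singleton_self _)
  map_one' := by
    apply Submodule.linearMap_qext
    ext x
    simp [Submodule.mapQ_apply, Representation.ofMulAction_def]
  map_mul' g h := by
    apply Submodule.linearMap_qext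
    ext x
    simp [Submodule.mapQ_apply, Representation.ofMulAction_def, mul_assoc]

namespace H1NormAux

variable (G : Type) [Group G] [Fintype G]

noncomputable def act (g : G) : (G →₀ ℤ) →ₗ[ℤ] (G →₀ ℤ) :=
  (MonoidAlgebra.coeffLinearEquiv ℤ).toLinearMap ∘ₗ Representation.ofMulAction ℤ G G g ∘ₗ
    (MonoidAlgebra.coeffLinearEquiv ℤ).symm.toLinearMap

lemma act_eq (g : G) (x : G →₀ ℤ) : act G g x = Finsupp.mapDomain (g • ·) x := by
  simp [act, Representation.ofMulAction_def]

lemma act_single (g x : G) (a : ℤ) : act G g (Finsupp.single x a) = Finsupp.single (g • x) a := by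
  rw [act_eq]; exact Finsupp.mapDomain_single

lemma act_apply (g : G) (x : G →₀ ℤ) (k : G) : act G g x k = x (g⁻¹ • k) := by
  rw [act_eq]
  conv_lhs => rw [show k = g • (g⁻¹ • k) by simp]
  exact Finsupp.mapDomain_apply (MulAction.injective g) x _

noncomputable def aug : (G →₀ ℤ) →ₗ[ℤ] ℤ := Finsupp.lsum ℤ fun _ => LinearMap.id

@[simp] lemma aug_single (g : G) (a : ℤ) : aug G (Finsupp.single g a) = a := by
  simp [aug]

lemma aug_normElement : aug G (normElement G) = Fintype.card G := by
  rw [normElement, map_sum]; simp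

noncomputable def toCirc : (G →₀ ℤ) →+ AddCircle (1 : ℚ) :=
  (QuotientAddGroup.mk' (AddSubgroup.zmultiples (1 : ℚ))).comp
    ((AddMonoidHom.mk' (fun r : ℚ => r / (Fintype.card G : ℚ)) (fun a b => add_div a b _)).comp
      ((Int.castAddHom ℚ).comp (aug G).toAddMonoidHom))

lemma toCirc_apply (x : G →₀ ℤ) :
    toCirc G x = (((aug G x : ℚ) / (Fintype.card G : ℚ) : ℚ) : AddCircle (1 : ℚ)) := rfl

lemma toCirc_normElement : toCirc G (normElement G) = 0 := by
  show ((((aug G (normElement G) : ℤ) : ℚ) / (Fintype.card G : ℚ) : ℚ) : AddCircle (1 : ℚ)) = 0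
  rw [aug_normElement]
  push_cast
  rw [div_self (by exact_mod_cast Fintype.card_ne_zero)]
  exact (AddCircle.coe_eq_zero_iff _).mpr ⟨1, by simp⟩

noncomputable def qaug : ((G →₀ ℤ) ⧸ normSubmodule G) →ₗ[ℤ] AddCircle (1 : ℚ) :=
  Submodule.liftQ (normSubmodule G) (toCirc G).toIntLinearMap
    (by
      rw [normSubmodule, Submodule.span_le, Set.singleton_subset_iff]
      exact LinearMap.mem_ker.mpr (toCirc_normElement G))

@[simp] lemma qaug_mk (x : G →₀ ℤ) :
    qaug G (Submodule.Quotient.mk x) = toCirc G x := rfl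

@[simp] lemma normQuotRep_mk (g : G) (x : G →₀ ℤ) :
    normQuotRep G g (Submodule.Quotient.mk x)
      = Submodule.Quotient.mk (act G g x) := by
  rfl

lemma aug_ofMulAction (g : G) (x : G →₀ ℤ) :
    aug G (act G g x) = aug G x := by
  have : (aug G).comp (act G g) = aug G := by
    apply Finsupp.lhom_ext
    intro h a
    simp [act_single]
  exact LinearMap.congr_fun this x

lemma toCirc_ofMulAction (g : G) (x : G →₀ ℤ) :
    toCirc G (act G g x) = toCirc G x := by
  show ((((aug G _ : ℤ) : ℚ) / _ : ℚ) : AddCircle (1:ℚ)) = (((aug G x : ℚ) / _ : ℚ) : AddCircle (1:ℚ))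
  rw [aug_ofMulAction]

lemma qaug_rep (g : G) (m : (G →₀ ℤ) ⧸ normSubmodule G) :
    qaug G (normQuotRep G g m) = qaug G m := by
  obtain ⟨x, rfl⟩ := Submodule.Quotient.mk_surjective _ m
  rw [normQuotRep_mk, qaug_mk, qaug_mk, toCirc_ofMulAction]


lemma aug_eq_sum (x : G →₀ ℤ) : aug G x = ∑ k : G, x k := by
  rw [aug, Finsupp.lsum_apply]
  exact Finsupp.sum_fintype _ _ (fun _ => rfl)

lemma normElement_apply (k : G) : normElement G k = 1 := by
  classical
  rw [normElement, Finsupp.finset_sum_apply]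
  simp [Finsupp.single_apply]

lemma mem_normSubmodule {x : G →₀ ℤ} :
    x ∈ normSubmodule G ↔ ∃ t : ℤ, t • normElement G = x := by
  rw [normSubmodule, Submodule.mem_span_singleton]

open groupCohomology

local notation "A" => Rep.of (normQuotRep G)

lemma repA (g : G) (m : (G →₀ ℤ) ⧸ normSubmodule G) :
    (Rep.of (normQuotRep G)).ρ g m = normQuotRep G g m := rfl

noncomputable def Phi0 :
    cocycles₁ (Rep.of (normQuotRep G)) →+ (Additive G →+ AddCircle (1 : ℚ)) where
  toFun f :=
    { toFun := fun g => qaug G (f g.toMul)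
      map_zero' := by
        show qaug G (f (1 : G)) = 0
        rw [cocycles₁_map_one, map_zero]
      map_add' := fun g h => by
        show qaug G (f (g.toMul * h.toMul)) = qaug G (f g.toMul) + qaug G (f h.toMul)
        rw [(mem_cocycles₁_iff (f : G → ((G →₀ ℤ) ⧸ normSubmodule G))).1 f.2 g.toMul h.toMul,
          map_add, repA, qaug_rep, add_comm] }
  map_zero' := by
    refine AddMonoidHom.ext fun g => ?_
    show qaug G ((0 : cocycles₁ (Rep.of (normQuotRep G))) g.toMul) = 0
    rw [show ((0 : cocycles₁ (Rep.of (normQuotRep G))) g.toMul)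
      = (0 : (G →₀ ℤ) ⧸ normSubmodule G) from rfl, map_zero]
  map_add' f1 f2 := by
    refine AddMonoidHom.ext fun g => ?_
    show qaug G ((f1 + f2) g.toMul) = qaug G (f1 g.toMul) + qaug G (f2 g.toMul)
    rw [show ((f1 + f2) g.toMul) = f1 g.toMul + f2 g.toMul from rfl, map_add]

noncomputable def Phi :
    cocycles₁ (Rep.of (normQuotRep G)) →ₗ[ℤ] (Additive G →+ AddCircle (1 : ℚ)) :=
  (Phi0 G).toIntLinearMap

lemma Phi_apply (f : cocycles₁ (Rep.of (normQuotRep G))) (g : G) :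
    Phi G f (Additive.ofMul g) = qaug G (f g) := rfl


lemma card_ne_zero' : ((Fintype.card G : ℚ)) ≠ 0 := by
  exact_mod_cast Fintype.card_ne_zero

lemma coboundaries_le_ker :
    (coboundaries₁ (Rep.of (normQuotRep G))).comap (cocycles₁ (Rep.of (normQuotRep G))).subtype
      ≤ LinearMap.ker (Phi G) := by
  intro f hf
  obtain ⟨x, hx⟩ := hf
  rw [LinearMap.mem_ker]
  refine AddMonoidHom.ext fun g => ?_
  show qaug G (f g.toMul) = 0
  have : f g.toMul = (Rep.of (normQuotRep G)).ρ g.toMul x - x := by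
    exact (congrArg (fun φ : G → ((G →₀ ℤ) ⧸ normSubmodule G) => φ g.toMul) hx).symm
  rw [this, map_sub, repA, qaug_rep, sub_self]

lemma ker_le_coboundaries :
    LinearMap.ker (Phi G) ≤
      (coboundaries₁ (Rep.of (normQuotRep G))).comap (cocycles₁ (Rep.of (normQuotRep G))).subtype := by
  classical
  intro f hf
  rw [LinearMap.mem_ker] at hf
  set n := Fintype.card G with hn
  -- choose preliminary lifts
  have h0 : ∀ g : G, ∃ y : G →₀ ℤ, Submodule.Quotient.mk y = f g :=
    fun g => Submodule.Quotient.mk_surjective _ (f g)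
  set F0 : G → (G →₀ ℤ) := fun g => (h0 g).choose with hF0
  have hF0spec : ∀ g, (Submodule.Quotient.mk (F0 g) : (G →₀ ℤ) ⧸ normSubmodule G) = f g :=
    fun g => (h0 g).choose_spec
  -- the augmentation of each lift is divisible by n
  have hdvd : ∀ g : G, ∃ z : ℤ, aug G (F0 g) = z * n := by
    intro g
    have h1 : qaug G (f g) = 0 := by
      have := DFunLike.congr_fun hf (Additive.ofMul g)
      exact this
    rw [← hF0spec g, qaug_mk, toCirc_apply, AddCircle.coe_eq_zero_iff] at h1
    obtain ⟨z, hz⟩ := h1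
    refine ⟨z, ?_⟩
    rw [zsmul_eq_mul, mul_one, eq_div_iff (card_ne_zero' G)] at hz
    exact_mod_cast hz.symm
  set m : G → ℤ := fun g => (hdvd g).choose with hm
  have hmspec : ∀ g, aug G (F0 g) = m g * n := fun g => (hdvd g).choose_spec
  -- the corrected lifts, with augmentation zero
  set F : G → (G →₀ ℤ) := fun g => F0 g - m g • normElement G with hF
  have haug : ∀ g, aug G (F g) = 0 := by
    intro g
    rw [hF]
    simp only [map_sub, map_smul, aug_normElement, smul_eq_mul]
    rw [hmspec g]
    ring
  have hmk : ∀ g, (Submodule.Quotient.mk (F g) : (G →₀ ℤ) ⧸ normSubmodule G) = f g := by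
    intro g
    rw [hF]
    simp only [Submodule.Quotient.mk_sub]
    rw [hF0spec g]
    have : (Submodule.Quotient.mk (m g • normElement G) : (G →₀ ℤ) ⧸ normSubmodule G) = 0 := by
      rw [Submodule.Quotient.mk_eq_zero]
      exact Submodule.smul_mem _ _ (Submodule.mem_span_singleton_self _)
    rw [this, sub_zero]
  -- F is an honest cocycle in ℤ[G]
  have hcoc : ∀ g h : G,
      F (g * h) = act G g (F h) + F g := by
    intro g h
    have hDmem : F (g * h) - act G g (F h) - F g
        ∈ normSubmodule G := by
      rw [← Submodule.Quotient.mk_eq_zero, Submodule.Quotient.mk_sub,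
        Submodule.Quotient.mk_sub, ← normQuotRep_mk, hmk, hmk, hmk,
        (mem_cocycles₁_iff (f : G → ((G →₀ ℤ) ⧸ normSubmodule G))).1 f.2 g h, repA]
      rw [add_sub_cancel_left, sub_self]
    obtain ⟨t, ht⟩ := (mem_normSubmodule G).1 hDmem
    have haugD : aug G (F (g * h) - act G g (F h) - F g) = 0 := by
      simp only [map_sub, aug_ofMulAction, haug]
      ring
    rw [← ht] at haugD
    simp only [map_smul, aug_normElement, smul_eq_mul] at haugD
    have ht0 : t = 0 := by
      rcases mul_eq_zero.1 haugD with h' | h'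
      · exact h'
      · exact absurd h' (by exact_mod_cast Fintype.card_ne_zero)
    rw [ht0, zero_smul] at ht
    have hD0 : F (g * h) - (act G g (F h) + F g) = 0 := by
      rw [← sub_sub, ← ht]
    rw [sub_eq_zero] at hD0
    exact hD0
  -- the splitting element
  set x : G →₀ ℤ := Finsupp.equivFunOnFinite.symm (fun k : G => F k⁻¹ 1) with hxdef
  have hxapply : ∀ k : G, x k = F k⁻¹ 1 := fun k => by
    rw [hxdef]; simp
  have hFx : ∀ g : G, act G g x - x = F g := by
    intro g
    ext k
    rw [Finsupp.sub_apply, act_apply, hxapply, hxapply]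
    have e1 : (g⁻¹ • k)⁻¹ = k⁻¹ * g := by
      rw [smul_eq_mul, mul_inv_rev, inv_inv]
    rw [e1]
    have e2 := congrArg (fun y : G →₀ ℤ => y 1) (hcoc k⁻¹ g)
    simp only [Finsupp.add_apply, act_apply, inv_inv, smul_eq_mul,
      mul_one] at e2
    rw [e2]
    ring
  have hrange : (f : G → ((G →₀ ℤ) ⧸ normSubmodule G))
      ∈ LinearMap.range (d₀₁ (Rep.of (normQuotRep G))).hom := by
    refine ⟨Submodule.Quotient.mk x, ?_⟩
    funext g
    show (Rep.of (normQuotRep G)).ρ g (Submodule.Quotient.mk x) - Submodule.Quotient.mk x = f g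
    rw [repA, normQuotRep_mk, ← Submodule.Quotient.mk_sub, hFx, hmk]
  exact hrange


lemma Phi_surjective : Function.Surjective (Phi G) := by
  classical
  intro φ
  set c : G → ℚ := fun g => (φ (Additive.ofMul g)).out with hc
  have hcspec : ∀ g : G, ((c g : ℚ) : AddCircle (1 : ℚ)) = φ (Additive.ofMul g) := fun g =>
    QuotientAddGroup.out_eq' _
  have hd : ∀ g h : G, ∃ z : ℤ, (z : ℚ) = c g + c h - c (g * h) := by
    intro g h
    have h0 : ((c g + c h - c (g * h) : ℚ) : AddCircle (1 : ℚ)) = 0 := by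
      have : ((c g + c h - c (g * h) : ℚ) : AddCircle (1 : ℚ))
          = ((c g : ℚ) : AddCircle (1 : ℚ)) + ((c h : ℚ) : AddCircle (1 : ℚ))
            - ((c (g * h) : ℚ) : AddCircle (1 : ℚ)) := by
        rw [QuotientAddGroup.mk_sub, QuotientAddGroup.mk_add]
      rw [this, hcspec, hcspec, hcspec]
      rw [show Additive.ofMul (g * h) = Additive.ofMul g + Additive.ofMul h from rfl, map_add]
      abel
    obtain ⟨z, hz⟩ := (AddCircle.coe_eq_zero_iff _).1 h0
    exact ⟨z, by rw [← hz, zsmul_eq_mul, mul_one]⟩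
  set D : G → G → ℤ := fun g h => (hd g h).choose with hD
  have hDspec : ∀ g h : G, ((D g h : ℤ) : ℚ) = c g + c h - c (g * h) := fun g h =>
    (hd g h).choose_spec
  set F : G → (G →₀ ℤ) := fun g => Finsupp.equivFunOnFinite.symm (fun k : G => D k⁻¹ g) with hF
  have hFapply : ∀ g k : G, F g k = D k⁻¹ g := fun g k => by rw [hF]; simp
  have hkey : ∀ g h : G, F (g * h) - act G g (F h) - F g
      = (-(D g h)) • normElement G := by
    intro g h
    ext k
    rw [Finsupp.sub_apply, Finsupp.sub_apply, act_apply,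
      Finsupp.smul_apply, normElement_apply, hFapply, hFapply, hFapply]
    have e1 : (g⁻¹ • k)⁻¹ = k⁻¹ * g := by rw [smul_eq_mul, mul_inv_rev, inv_inv]
    rw [e1, smul_eq_mul, mul_one]
    have hcast : ((D k⁻¹ (g * h) - D (k⁻¹ * g) h - D k⁻¹ g : ℤ) : ℚ) = ((-(D g h) : ℤ) : ℚ) := by
      push_cast
      rw [hDspec k⁻¹ (g * h), hDspec (k⁻¹ * g) h, hDspec k⁻¹ g, hDspec g h, mul_assoc]
      ring
    exact_mod_cast hcast
  have hf : (fun g => (Submodule.Quotient.mk (F g) : (G →₀ ℤ) ⧸ normSubmodule G))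
      ∈ cocycles₁ (Rep.of (normQuotRep G)) := by
    rw [mem_cocycles₁_iff]
    intro g h
    rw [repA, normQuotRep_mk]
    have h0 : (Submodule.Quotient.mk (F (g * h)) : (G →₀ ℤ) ⧸ normSubmodule G)
        - Submodule.Quotient.mk (act G g (F h))
        - Submodule.Quotient.mk (F g) = 0 := by
      rw [← Submodule.Quotient.mk_sub, ← Submodule.Quotient.mk_sub, hkey g h,
        Submodule.Quotient.mk_eq_zero]
      exact Submodule.smul_mem _ _ (Submodule.mem_span_singleton_self _)
    have h1 := sub_eq_zero.1 (by rwa [sub_sub] at h0)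
    exact h1
  refine ⟨⟨_, hf⟩, ?_⟩
  refine AddMonoidHom.ext fun g => ?_
  show qaug G (Submodule.Quotient.mk (F g.toMul)) = φ g
  rw [qaug_mk, toCirc_apply]
  have hsum : ∑ k : G, (c (k⁻¹ * g.toMul) : ℚ) = ∑ k : G, c k⁻¹ := by
    apply Fintype.sum_equiv (Equiv.mulLeft g.toMul⁻¹)
    intro k
    congr 1
    rw [show (Equiv.mulLeft g.toMul⁻¹) k = g.toMul⁻¹ * k from rfl, mul_inv_rev, inv_inv]
  have hFq : ∀ k : G, ((F g.toMul k : ℤ) : ℚ) = c k⁻¹ + c g.toMul - c (k⁻¹ * g.toMul) :=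
    fun k => by rw [hFapply g.toMul k, hDspec k⁻¹ g.toMul]
  have haugF : (aug G (F g.toMul) : ℚ) = (Fintype.card G : ℚ) * c g.toMul := by
    rw [aug_eq_sum]
    push_cast
    rw [Finset.sum_congr rfl (fun k _ => hFq k), Finset.sum_sub_distrib,
      Finset.sum_add_distrib, hsum, Finset.sum_const, Finset.card_univ, nsmul_eq_mul]
    ring
  rw [haugF, mul_comm, mul_div_assoc, div_self (card_ne_zero' G), mul_one]
  exact hcspec g.toMul


noncomputable def H1QuotEquiv :
    ((cocycles₁ (Rep.of (normQuotRep G))) ⧸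
      (coboundaries₁ (Rep.of (normQuotRep G))).comap (cocycles₁ (Rep.of (normQuotRep G))).subtype)
      ≃ₗ[ℤ] groupCohomology.H1 (Rep.of (normQuotRep G)) :=
  LinearEquiv.ofBijective
    (Submodule.liftQ _ (H1π (Rep.of (normQuotRep G))).hom
      (by intro f hf; rw [LinearMap.mem_ker]; exact (H1π_eq_zero_iff f).2 hf))
    ⟨by
      rw [← LinearMap.ker_eq_bot]
      apply Submodule.ker_liftQ_eq_bot
      intro f hf
      exact (H1π_eq_zero_iff f).1 (LinearMap.mem_ker.1 hf),
     by
      intro y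
      obtain ⟨f, hf⟩ := (ModuleCat.epi_iff_surjective (H1π (Rep.of (normQuotRep G)))).1
        inferInstance y
      exact ⟨Submodule.Quotient.mk f, hf⟩⟩

noncomputable def H1Equiv :
    groupCohomology.H1 (Rep.of (normQuotRep G)) ≃ₗ[ℤ] (Additive G →+ AddCircle (1 : ℚ)) :=
  (H1QuotEquiv G).symm ≪≫ₗ LinearEquiv.ofBijective
    (Submodule.liftQ _ (Phi G)
      (coboundaries_le_ker G))
    ⟨by
      rw [← LinearMap.ker_eq_bot]
      exact Submodule.ker_liftQ_eq_bot _ _ _ (ker_le_coboundaries G),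
     by
      intro φ
      obtain ⟨f, hf⟩ := Phi_surjective G φ
      exact ⟨Submodule.Quotient.mk f, hf⟩⟩


lemma hasEnoughRootsOfUnity_addCircle (n : ℕ) (hn : n ≠ 0) :
    HasEnoughRootsOfUnity (Multiplicative (AddCircle (1 : ℚ))) n := by
  haveI : Fact ((0 : ℚ) < 1) := ⟨one_pos⟩
  have hpos : 0 < n := Nat.pos_of_ne_zero hn
  have hord : addOrderOf (((1 : ℚ) / (n : ℚ) : ℚ) : AddCircle (1 : ℚ)) = n :=
    AddCircle.addOrderOf_period_div hpos
  set ζa : AddCircle (1 : ℚ) := (((1 : ℚ) / (n : ℚ) : ℚ) : AddCircle (1 : ℚ)) with hζa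
  set ζ : Multiplicative (AddCircle (1 : ℚ)) := Multiplicative.ofAdd ζa with hζdef
  have hζ : orderOf ζ = n := by
    rw [hζdef, orderOf_ofAdd_eq_addOrderOf]
    exact hord
  have hgen : ∀ a : AddCircle (1 : ℚ), n • a = 0 → ∃ z : ℤ, z • ζa = a := by
    intro a ha
    obtain ⟨q, hq⟩ : ∃ q : ℚ, (q : AddCircle (1 : ℚ)) = a := ⟨a.out, QuotientAddGroup.out_eq' a⟩
    rw [← hq, ← AddCircle.coe_nsmul, AddCircle.coe_eq_zero_iff] at ha
    obtain ⟨z, hz⟩ := ha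
    refine ⟨z, ?_⟩
    have hn' : (n : ℚ) ≠ 0 := Nat.cast_ne_zero.mpr hn
    rw [hζa, ← AddCircle.coe_zsmul, ← hq]
    congr 1
    rw [zsmul_eq_mul, mul_one, nsmul_eq_mul] at hz
    rw [zsmul_eq_mul]
    field_simp
    rw [hz]
  constructor
  · exact ⟨ζ, hζ ▸ IsPrimitiveRoot.orderOf ζ⟩
  · set u : (Multiplicative (AddCircle (1 : ℚ)))ˣ := toUnits ζ with hu
    have humem : u ∈ rootsOfUnity n (Multiplicative (AddCircle (1 : ℚ))) := by
      rw [mem_rootsOfUnity, hu, ← map_pow]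
      have : ζ ^ n = 1 := by rw [← hζ]; exact pow_orderOf_eq_one ζ
      rw [this, map_one]
    refine ⟨⟨⟨u, humem⟩, fun x => ?_⟩⟩
    have hx : ((x : (Multiplicative (AddCircle (1 : ℚ)))ˣ) : Multiplicative (AddCircle (1 : ℚ))) ^ n = 1 := by
      have := (mem_rootsOfUnity' n _).1 x.2
      exact this
    have hxa : n • Multiplicative.toAdd ((x : (Multiplicative (AddCircle (1 : ℚ)))ˣ) : Multiplicative (AddCircle (1 : ℚ))) = 0 := by
      rw [← toAdd_pow, hx]
      rfl
    obtain ⟨z, hz⟩ := hgen _ hxa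
    refine ⟨z, ?_⟩
    apply Subtype.ext
    apply Units.ext
    show ((u ^ z : (Multiplicative (AddCircle (1 : ℚ)))ˣ) : Multiplicative (AddCircle (1 : ℚ)))
      = ((x : (Multiplicative (AddCircle (1 : ℚ)))ˣ) : Multiplicative (AddCircle (1 : ℚ)))
    rw [Units.val_zpow_eq_zpow_val]
    apply Multiplicative.toAdd.injective
    rw [toAdd_zpow]
    rw [show Multiplicative.toAdd ((u : (Multiplicative (AddCircle (1:ℚ)))ˣ) : Multiplicative (AddCircle (1:ℚ))) = ζa from rfl]
    exact hz


instance : Finite (Abelianization G) :=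
  Finite.of_surjective (Abelianization.of (G := G)) (by
    intro x
    exact QuotientGroup.mk'_surjective _ x)

lemma homEquivAb : Nonempty ((Additive G →+ AddCircle (1 : ℚ)) ≃ Abelianization G) := by
  haveI : HasEnoughRootsOfUnity (Multiplicative (AddCircle (1 : ℚ)))
      (Monoid.exponent (Abelianization G)) :=
    hasEnoughRootsOfUnity_addCircle _ Monoid.exponent_ne_zero_of_finite
  obtain ⟨e⟩ := CommGroup.monoidHom_mulEquiv_of_hasEnoughRootsOfUnity (Abelianization G)
    (Multiplicative (AddCircle (1 : ℚ)))
  exact ⟨(AddMonoidHom.toMultiplicativeRight.trans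
      (Abelianization.lift :
        (G →* Multiplicative (AddCircle (1 : ℚ))) ≃ (Abelianization G →* _))).trans
      (((MulEquiv.monoidHomCongrRightEquiv (M := Abelianization G)
        (toUnits (G := Multiplicative (AddCircle (1 : ℚ)))))).trans e.toEquiv)⟩

end H1NormAux

/-- `H^1(G, ℤ[G]/ℤ·N_G) ≅ Hom(G, ℚ/ℤ)`; in particular it is finite of order equal to the
order of the abelianization of `G`. -/
theorem h1_normQuotRep (G : Type) [Group G] [Fintype G] :
    Nonempty (groupCohomology.H1 (Rep.of (normQuotRep G)) ≃+
        (Additive G →+ AddCircle (1 : ℚ))) ∧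
      Finite (groupCohomology.H1 (Rep.of (normQuotRep G))) ∧
      Nat.card (groupCohomology.H1 (Rep.of (normQuotRep G))) = Nat.card (Abelianization G) := by
  obtain ⟨e2⟩ := H1NormAux.homEquivAb G
  let e := (H1NormAux.H1Equiv G).toAddEquiv
  refine ⟨⟨e⟩, ?_, ?_⟩
  · exact Finite.of_equiv _ (e.toEquiv.trans e2).symm
  · exact Nat.card_congr (e.toEquiv.trans e2)
end

section
/- Let p be a prime, K a finite extension of ℚ_p, and K̄ an algebraic closure of K equipped with the unique absolute value extending the p-adic absolute value on K (this absolute value is invariant under all K-algebra automorphisms of K̄). Let G = Aut_K(K̄) and let N be a finitely generated abelian group equipped with an action of G by group automorphisms which factors through a finite quotient; precisely, assume there exists an intermediate field L of K̄/K, finite over K, such that every σ ∈ G fixing L pointwise acts trivially on N. Let f : N → K̄ˣ be a group homomorphism (from the additive group N to the multiplicative group of K̄) which is G-equivariant, i.e. f(σ·x) = σ(f(x)) for all σ ∈ G and x ∈ N. Then |f(x)| = 1 for all x ∈ N if and only if |f(x)| = 1 for all G-invariant elements x ∈ N (i.e. all x with σ·x = x for every σ ∈ G). -/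
/-- Proposition 3.2(1): let `K` be a finite extension of `ℚ_p`, `K̄` an algebraic closure of `K`
equipped with the unique (Galois-invariant) absolute value extending the `p`-adic absolute
value, `G = Aut_K(K̄)`, and `N` a finitely generated abelian group with a `G`-action factoring
through a finite quotient.  A `G`-equivariant homomorphism `f : N → K̄ˣ` takes all its values
in the units (absolute value `1`) if and only if it takes unit values on all `G`-invariant
elements of `N`. -/
theorem equivariant_hom_unit_values_iff_on_invariants
    {p : ℕ} [Fact p.Prime]
    (K : Type) [Field K] [Algebra ℚ_[p] K] [FiniteDimensional ℚ_[p] K]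
    (Kbar : Type) [Field Kbar] [Algebra K Kbar] [IsAlgClosure K Kbar]
    [Algebra ℚ_[p] Kbar] [IsScalarTower ℚ_[p] K Kbar]
    (v : AbsoluteValue Kbar ℝ)
    (hv_ext : ∀ x : ℚ_[p], v (algebraMap ℚ_[p] Kbar x) = ‖x‖)
    (hv_inv : ∀ (σ : Kbar ≃ₐ[K] Kbar) (x : Kbar), v (σ x) = v x)
    (N : Type) [AddCommGroup N] [AddGroup.FG N]
    [DistribMulAction (Kbar ≃ₐ[K] Kbar) N]
    (L : IntermediateField K Kbar) (hL : FiniteDimensional K L)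
    (hfix : ∀ σ : Kbar ≃ₐ[K] Kbar, (∀ x ∈ L, σ x = x) → ∀ n : N, σ • n = n)
    (f : Multiplicative N →* Kbarˣ)
    (hf : ∀ (σ : Kbar ≃ₐ[K] Kbar) (x : N),
      (f (Multiplicative.ofAdd (σ • x)) : Kbar) = σ (f (Multiplicative.ofAdd x))) :
    (∀ x : N, v (f (Multiplicative.ofAdd x)) = 1) ↔
      ∀ x : N, (∀ σ : Kbar ≃ₐ[K] Kbar, σ • x = x) → v (f (Multiplicative.ofAdd x)) = 1 := by

  classical
  constructor
  · intro h x _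
    exact h x
  · intro h x
    -- Key: if σ and τ agree on L, they act the same way on x.
    have key : ∀ σ τ : Kbar ≃ₐ[K] Kbar, (∀ a ∈ L, σ a = τ a) → σ • x = τ • x := by
      intro σ τ hst
      have hfixx : (σ⁻¹ * τ) • x = x := by
        apply hfix
        intro a ha
        have h1 : (σ⁻¹ * τ) a = σ⁻¹ (τ a) := rfl
        rw [h1, ← hst a ha]
        show σ.symm (σ a) = a
        exact σ.symm_apply_apply a
      calc σ • x = σ • ((σ⁻¹ * τ) • x) := by rw [hfixx]
        _ = (σ * (σ⁻¹ * τ)) • x := (mul_smul _ _ _).symm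
        _ = τ • x := by rw [mul_inv_cancel_left]
    haveI := hL
    let r : (Kbar ≃ₐ[K] Kbar) → (L →ₐ[K] Kbar) := fun σ => σ.toAlgHom.comp L.val
    have hr : ∀ σ τ : Kbar ≃ₐ[K] Kbar, r σ = r τ → σ • x = τ • x := by
      intro σ τ hst
      apply key
      intro a ha
      have := congrArg (fun g => g ⟨a, ha⟩) hst
      simpa [r] using this
    have hfin : (Set.range fun σ : Kbar ≃ₐ[K] Kbar => σ • x).Finite := by
      apply Set.Finite.subset (Set.finite_range
        (fun e : (L →ₐ[K] Kbar) =>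
          if h : ∃ σ : Kbar ≃ₐ[K] Kbar, r σ = e then h.choose • x else x))
      rintro y ⟨σ, rfl⟩
      refine ⟨r σ, ?_⟩
      have hex : ∃ τ : Kbar ≃ₐ[K] Kbar, r τ = r σ := ⟨σ, rfl⟩
      simp only [dif_pos hex]
      exact hr _ _ hex.choose_spec
    set S : Finset N := hfin.toFinset with hS
    have memS : ∀ y : N, y ∈ S ↔ ∃ σ : Kbar ≃ₐ[K] Kbar, σ • x = y := by
      intro y
      simp [hS, Set.Finite.mem_toFinset]
    have hxS : x ∈ S := (memS x).mpr ⟨1, one_smul _ _⟩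
    -- the finset S is stable under the action
    have hstab : ∀ τ : Kbar ≃ₐ[K] Kbar, S.image (fun y => τ • y) = S := by
      intro τ
      apply Finset.eq_of_subset_of_card_le
      · intro y hy
        rcases Finset.mem_image.mp hy with ⟨z, hz, rfl⟩
        rcases (memS z).mp hz with ⟨σ, rfl⟩
        exact (memS _).mpr ⟨τ * σ, mul_smul τ σ x⟩
      · rw [Finset.card_image_of_injective _ (MulAction.injective τ)]
    have hsum : ∀ τ : Kbar ≃ₐ[K] Kbar, τ • (∑ y ∈ S, y) = ∑ y ∈ S, y := by
      intro τ
      rw [Finset.smul_sum]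
      calc ∑ y ∈ S, τ • y = ∑ y ∈ S.image (fun y => τ • y), y := by
            rw [Finset.sum_image (fun a _ b _ hab => MulAction.injective τ hab)]
        _ = ∑ y ∈ S, y := by rw [hstab]
    have h1 : v (f (Multiplicative.ofAdd (∑ y ∈ S, y))) = 1 := h _ hsum
    -- compute f of the sum
    have hprod : (f (Multiplicative.ofAdd (∑ y ∈ S, y)) : Kbar)
        = ∏ y ∈ S, (f (Multiplicative.ofAdd y) : Kbar) := by
      rw [ofAdd_sum, map_prod]
      push_cast
      rfl
    have hterm : ∀ y ∈ S, v (f (Multiplicative.ofAdd y)) = v (f (Multiplicative.ofAdd x)) := by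
      intro y hy
      rcases (memS y).mp hy with ⟨σ, rfl⟩
      rw [hf σ x, hv_inv]
    have h2 : (v (f (Multiplicative.ofAdd x))) ^ S.card = 1 := by
      rw [← h1, hprod, map_prod, Finset.prod_congr rfl hterm, Finset.prod_const]
    have hcard : S.card ≠ 0 := Finset.card_ne_zero_of_mem hxS
    have hpos : 0 ≤ v (f (Multiplicative.ofAdd x)) := v.nonneg _
    rcases lt_trichotomy (v (f (Multiplicative.ofAdd x))) 1 with h3 | h3 | h3
    · exact absurd h2 (by have := pow_lt_one₀ hpos h3 hcard; linarith)
    · exact h3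
    · exact absurd h2 (by have := one_lt_pow₀ h3 hcard; linarith)
end
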